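/- arXiv:2010.04623 — 2 statements merged into one kernel-verified Lean document; each statement's English description precedes it below -/
import Mathlib

section
/- Let f be a polymorphism of (1in3, D2+) of arity n such that f(∅) = 0 and f has no singleton 2-set (i.e., f({x}) ≠ 2 for every x ∈ [n]). Then f has a singleton 1-set (there exists x ∈ [n] with f({x}) = 1), and f does not have any two disjoint 1-sets (there are no disjoint X, Y ⊆ [n] with f(X) = f(Y) = 1). -/
/-- `f` is a polymorphism of `(1in3, B)` where `B` has relation `R`:
for every partition of `[n]` into three pairwise disjoint blocks `X, Y, Z`,
the triple of values is in `R`. -/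
def IsPolymorphism {n : ℕ} {B : Type*} (R : B → B → B → Prop) (f : Finset (Fin n) → B) : Prop :=
  ∀ X Y Z : Finset (Fin n), Disjoint X Y → Disjoint X Z → Disjoint Y Z →
    X ∪ Y ∪ Z = Finset.univ → R (f X) (f Y) (f Z)

/-- The relation of `D2+`: all coordinate permutations of (0,0,1), (1,1,2), (0,1,2). -/
def relD2p (a b c : ℕ) : Prop :=
  ({a, b, c} : Multiset ℕ) = {0, 0, 1} ∨ ({a, b, c} : Multiset ℕ) = {1, 1, 2} ∨
    ({a, b, c} : Multiset ℕ) = {0, 1, 2}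

lemma mem_vals {a b c : ℕ} (h : relD2p a b c) :
    (a = 0 ∨ a = 1 ∨ a = 2) ∧ (b = 0 ∨ b = 1 ∨ b = 2) ∧ (c = 0 ∨ c = 1 ∨ c = 2) := by
  have ha : a ∈ ({a, b, c} : Multiset ℕ) := by simp
  have hb : b ∈ ({a, b, c} : Multiset ℕ) := by simp
  have hc : c ∈ ({a, b, c} : Multiset ℕ) := by simp
  rcases h with h | h | h <;> rw [h] at ha hb hc <;> simp at ha hb hc <;> tauto

lemma relCases {a b c : ℕ} (h : relD2p a b c) :
    (a=0∧b=0∧c=1)∨(a=0∧b=1∧c=0)∨(a=1∧b=0∧c=0)∨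
    (a=1∧b=1∧c=2)∨(a=1∧b=2∧c=1)∨(a=2∧b=1∧c=1)∨
    (a=0∧b=1∧c=2)∨(a=0∧b=2∧c=1)∨(a=1∧b=0∧c=2)∨
    (a=1∧b=2∧c=0)∨(a=2∧b=0∧c=1)∨(a=2∧b=1∧c=0) := by
  obtain ⟨ha, hb, hc⟩ := mem_vals h
  rcases ha with rfl|rfl|rfl <;> rcases hb with rfl|rfl|rfl <;> rcases hc with rfl|rfl|rfl <;>
    revert h <;> unfold relD2p <;> decide

section
variable {n : ℕ} {f : Finset (Fin n) → ℕ}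

lemma pairs (hf : IsPolymorphism relD2p f) (h0 : f ∅ = 0) (S : Finset (Fin n)) :
    (f S = 0 ∧ f Sᶜ = 1) ∨ (f S = 1 ∧ f Sᶜ = 0) ∨ (f S = 1 ∧ f Sᶜ = 2) ∨
      (f S = 2 ∧ f Sᶜ = 1) := by
  have h := hf S Sᶜ ∅ disjoint_compl_right (Finset.disjoint_empty_right _)
    (Finset.disjoint_empty_right _) (by simp)
  rw [h0] at h
  have := relCases h
  omega

lemma exists_one (hf : IsPolymorphism relD2p f) (h0 : f ∅ = 0) (h2 : ∀ x : Fin n, f {x} ≠ 2) :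
    ∀ S : Finset (Fin n), f S = 1 → ∃ x ∈ S, f {x} = 1 := by
  intro S
  induction S using Finset.strongInduction with
  | _ S ih =>
    intro hS
    have hne : S.Nonempty := by
      rcases Finset.eq_empty_or_nonempty S with rfl | h
      · rw [h0] at hS; omega
      · exact h
    obtain ⟨x, hx⟩ := hne
    rcases (pairs hf h0 {x}) with ⟨h, -⟩ | ⟨h, -⟩ | ⟨h, -⟩ | ⟨h, -⟩
    · -- f {x} = 0
      have hSc : f Sᶜ = 0 ∨ f Sᶜ = 2 := by have := pairs hf h0 S; omega
      have hrel := hf {x} (S.erase x) Sᶜ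
        (Finset.disjoint_singleton_left.mpr (Finset.notMem_erase x S))
        (Finset.disjoint_singleton_left.mpr (by simp [hx]))
        (Finset.disjoint_left.mpr (fun a ha hb => (Finset.mem_compl.mp hb)
          (Finset.mem_of_mem_erase ha)))
        (by
          ext a
          simp only [Finset.mem_union, Finset.mem_singleton, Finset.mem_erase,
            Finset.mem_compl, Finset.mem_univ, iff_true]
          by_cases h' : a ∈ S <;> by_cases h'' : a = x <;> tauto)
      rw [h] at hrel
      have h1 : f (S.erase x) = 1 := by have := relCases hrel; omega
      obtain ⟨y, hy, hy1⟩ := ih (S.erase x) (Finset.erase_ssubset hx) h1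
      exact ⟨y, Finset.mem_of_mem_erase hy, hy1⟩
    · exact ⟨x, hx, h⟩
    · exact ⟨x, hx, h⟩
    · exact absurd h (h2 x)

lemma add_zero_elt (hf : IsPolymorphism relD2p f) (h0 : f ∅ = 0)
    {S : Finset (Fin n)} {z : Fin n} (hS : f S = 1) (hz : f {z} = 0) (hzS : z ∉ S) :
    f (insert z S) = 1 := by
  set T := insert z S with hT
  have hrel := hf Tᶜ S {z}
    (Finset.disjoint_left.mpr (fun a ha hb => (Finset.mem_compl.mp ha)
      (by simp [hT, Finset.mem_insert, hb])))
    (Finset.disjoint_left.mpr (fun a ha hb => (Finset.mem_compl.mp ha)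
      (by rw [Finset.mem_singleton.mp hb]; exact Finset.mem_insert_self z S)))
    (Finset.disjoint_singleton_right.mpr hzS)
    (by
      ext a
      simp only [Finset.mem_union, Finset.mem_compl, hT, Finset.mem_insert,
        Finset.mem_singleton, Finset.mem_univ, iff_true]
      tauto)
  rw [hS, hz] at hrel
  have h1 : f Tᶜ = 0 ∨ f Tᶜ = 2 := by have := relCases hrel; omega
  have := pairs hf h0 T
  omega

lemma no_two_all_ones (hf : IsPolymorphism relD2p f) (h0 : f ∅ = 0) :
    ∀ W : Finset (Fin n), f W = 2 → (∀ z ∈ W, f {z} = 1) → False := by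
  intro W
  induction W using Finset.strongInduction with
  | _ W ih =>
    intro hW hall
    have hne : W.Nonempty := by
      rcases Finset.eq_empty_or_nonempty W with rfl | h
      · rw [h0] at hW; omega
      · exact h
    obtain ⟨x, hx⟩ := hne
    have hWc : f Wᶜ = 1 := by have := pairs hf h0 W; omega
    have hrel := hf (W.erase x) {x} Wᶜ
      (Finset.disjoint_singleton_right.mpr (Finset.notMem_erase x W))
      (Finset.disjoint_left.mpr (fun a ha hb => (Finset.mem_compl.mp hb)
        (Finset.mem_of_mem_erase ha)))
      (Finset.disjoint_singleton_left.mpr (by simp [hx]))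
      (by
        ext a
        simp only [Finset.mem_union, Finset.mem_singleton, Finset.mem_erase,
          Finset.mem_compl, Finset.mem_univ, iff_true]
        by_cases h' : a ∈ W <;> by_cases h'' : a = x <;> tauto)
    rw [hall x hx, hWc] at hrel
    have h2' : f (W.erase x) = 2 := by have := relCases hrel; omega
    exact ih (W.erase x) (Finset.erase_ssubset hx) h2'
      (fun z hz => hall z (Finset.mem_of_mem_erase hz))

lemma absorb (hf : IsPolymorphism relD2p f) (h0 : f ∅ = 0) :
    ∀ D : Finset (Fin n), (∀ z ∈ D, f {z} = 0) → ∀ S : Finset (Fin n), f S = 1 →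
      Disjoint S D → f (S ∪ D) = 1 := by
  intro D
  induction D using Finset.induction_on with
  | empty => intro _ S hS _; simpa using hS
  | @insert a D' haD ih =>
    intro hall S hS hdisj
    have h1 : f (S ∪ D') = 1 := ih (fun z hz => hall z (Finset.mem_insert_of_mem hz)) S hS
      (hdisj.mono_right (Finset.subset_insert a D'))
    have ha0 : f {a} = 0 := hall a (Finset.mem_insert_self a D')
    have haS : a ∉ S ∪ D' := by
      simp only [Finset.mem_union]
      rintro (h | h)
      · exact (Finset.disjoint_left.mp hdisj h) (Finset.mem_insert_self a D')
      · exact haD h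
    have := add_zero_elt hf h0 h1 ha0 haS
    rwa [Finset.union_insert]

end

theorem stmt_4 (n : ℕ) (hn : 1 ≤ n) (f : Finset (Fin n) → ℕ) (hf : IsPolymorphism relD2p f)
    (h0 : f ∅ = 0) (h2 : ∀ x : Fin n, f {x} ≠ 2) :
    (∃ x : Fin n, f {x} = 1) ∧
      ∀ X Y : Finset (Fin n), Disjoint X Y → ¬(f X = 1 ∧ f Y = 1) := by
  haveI : Nonempty (Fin n) := ⟨⟨0, hn⟩⟩
  have huniv : f Finset.univ = 1 := by
    have := pairs hf h0 (∅ : Finset (Fin n))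
    rw [Finset.compl_empty] at this
    omega
  obtain ⟨x0, -, hx0⟩ := exists_one hf h0 h2 Finset.univ huniv
  refine ⟨⟨x0, hx0⟩, ?_⟩
  rintro X Y hXY ⟨hX, hY⟩
  obtain ⟨x, hxX, hx1⟩ := exists_one hf h0 h2 X hX
  obtain ⟨y, hyY, hy1⟩ := exists_one hf h0 h2 Y hY
  have hxy : x ≠ y := fun h => (Finset.disjoint_left.mp hXY hxX) (h ▸ hyY)
  -- singleton values are 0 or 1
  have hsing : ∀ z : Fin n, f {z} = 0 ∨ f {z} = 1 := by
    intro z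
    have := pairs hf h0 ({z} : Finset (Fin n))
    have := h2 z
    omega
  classical
  set D : Finset (Fin n) := Finset.univ.filter (fun z => f {z} = 0) with hD
  have hxD : x ∉ D := by simp [hD, hx1]
  have hyD : y ∉ D := by simp [hD, hy1]
  have hP : f ({x} ∪ D) = 1 := by
    refine absorb hf h0 D (fun z hz => ?_) {x} hx1
      (Finset.disjoint_singleton_left.mpr hxD)
    simpa [hD] using hz
  have hyP : y ∉ {x} ∪ D := by
    simp only [Finset.mem_union, Finset.mem_singleton]
    rintro (h | h)
    · exact hxy h.symm
    · exact hyD h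
  have hrel := hf ({x} ∪ D) {y} (({x} ∪ D ∪ {y})ᶜ)
    (Finset.disjoint_singleton_right.mpr hyP)
    (Finset.disjoint_left.mpr (fun a ha hb => (Finset.mem_compl.mp hb)
      (Finset.mem_union_left _ ha)))
    (Finset.disjoint_left.mpr (fun a ha hb => (Finset.mem_compl.mp hb)
      (Finset.mem_union_right _ ha)))
    (Finset.union_compl _)
  rw [hP, hy1] at hrel
  have hE2 : f (({x} ∪ D ∪ {y})ᶜ) = 2 := by have := relCases hrel; omega
  refine no_two_all_ones hf h0 _ hE2 (fun z hz => ?_)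
  have hzD : z ∉ D :=
    fun h => (Finset.mem_compl.mp hz)
      (Finset.mem_union_left _ (Finset.mem_union_right _ h))
  rcases hsing z with h | h
  · exact absurd (by simp [hD, h]) hzD
  · exact h
end

section
/- Let f be a polymorphism of (1in3, Č) of arity n with f(∅) = i, and suppose f has no (i+3 mod 4)-set of size at most 2 (i.e., f(X) ≠ (i+3) mod 4 for every X ⊆ [n] with |X| ≤ 2). Then there exists a singleton (i+1 mod 4)-set, i.e., some x ∈ [n] with f({x}) = (i+1) mod 4. -/
/-- The relation of `Č`: all coordinate permutations of (0,0,1), (1,1,2), (2,2,3), (3,3,0). -/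
def relC (a b c : Fin 4) : Prop :=
  ({a, b, c} : Multiset (Fin 4)) = {0, 0, 1} ∨ ({a, b, c} : Multiset (Fin 4)) = {1, 1, 2} ∨
    ({a, b, c} : Multiset (Fin 4)) = {2, 2, 3} ∨ ({a, b, c} : Multiset (Fin 4)) = {3, 3, 0}

lemma relC_l1 : ∀ i a b : Fin 4, relC a b i → a = i + 3 ∨ a = i ∨ a = i + 1 := by unfold relC; decide

lemma relC_l2 : ∀ i c : Fin 4, relC i i c → c = i + 1 := by unfold relC; decide

lemma relC_l3 : ∀ i a : Fin 4, relC a (i + 1) i → a = i := by unfold relC; decide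

lemma relC_l4 : ∀ i : Fin 4, ¬ relC i i i := by unfold relC; decide

theorem stmt_16 (n : ℕ) (hn : 1 ≤ n) (f : Finset (Fin n) → Fin 4) (hf : IsPolymorphism relC f)
    (i : Fin 4) (hi : f ∅ = i)
    (h3 : ∀ X : Finset (Fin n), X.card ≤ 2 → f X ≠ i + 3) :
    ∃ x : Fin n, f {x} = i + 1 := by
  by_contra hcon
  push_neg at hcon
  -- every singleton has value i
  have hs : ∀ x : Fin n, f {x} = i := by
    intro x
    have hrel : relC (f {x}) (f {x}ᶜ) (f ∅) := hf {x} {x}ᶜ ∅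
      (disjoint_compl_right) (Finset.disjoint_empty_right _) (Finset.disjoint_empty_right _)
      (by simp)
    rw [hi] at hrel
    rcases relC_l1 i (f {x}) (f {x}ᶜ) hrel with h | h | h
    · exact absurd h (h3 {x} (by simp))
    · exact h
    · exact absurd h (hcon x)
  -- every non-universal set has value i
  have hclaim : ∀ k : ℕ, ∀ A : Finset (Fin n), A.card = k → A ≠ Finset.univ → f A = i := by
    intro k
    induction k with
    | zero =>
      intro A hA _
      rw [Finset.card_eq_zero] at hA
      rw [hA, hi]
    | succ k ih =>
      intro A hA hAu
      have hApos : 0 < A.card := by omega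
      obtain ⟨x, hx⟩ := Finset.card_pos.mp hApos
      set A' := A.erase x with hA'
      have hA'card : A'.card = k := by
        rw [hA', Finset.card_erase_of_mem hx, hA]
        omega
      have hA'ne : A' ≠ Finset.univ := by
        intro h
        have : x ∈ A' := h ▸ Finset.mem_univ x
        exact Finset.notMem_erase x A this
      have hfA' : f A' = i := ih A' hA'card hA'ne
      have hins : A' ∪ {x} = A := by
        rw [hA', Finset.union_comm]
        simpa using Finset.insert_erase hx
      have hd1 : Disjoint A' ({x} : Finset (Fin n)) := by
        simp [hA', Finset.disjoint_singleton_right]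
      have hd2 : Disjoint A' Aᶜ := Finset.disjoint_left.mpr fun a ha hc =>
        (Finset.mem_compl.mp hc) (Finset.mem_of_mem_erase ha)
      have hd3 : Disjoint ({x} : Finset (Fin n)) Aᶜ := by
        simp [Finset.disjoint_singleton_left, hx]
      have hrel : relC (f A') (f {x}) (f Aᶜ) := hf A' {x} Aᶜ hd1 hd2 hd3
        (by rw [hins]; exact Finset.union_compl A)
      rw [hfA', hs x] at hrel
      have hAc : f Aᶜ = i + 1 := relC_l2 i _ hrel
      have hrel2 : relC (f A) (f Aᶜ) (f ∅) := hf A Aᶜ ∅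
        disjoint_compl_right (Finset.disjoint_empty_right _) (Finset.disjoint_empty_right _)
        (by simp)
      rw [hAc, hi] at hrel2
      exact relC_l3 i _ hrel2
  -- contradiction
  have x0 : Fin n := ⟨0, hn⟩
  have hA : f (({x0} : Finset (Fin n))ᶜ) = i := by
    apply hclaim (({x0} : Finset (Fin n))ᶜ).card _ rfl
    intro h
    have : x0 ∈ (({x0} : Finset (Fin n))ᶜ) := h ▸ Finset.mem_univ x0
    simp at this
  have hrel : relC (f {x0}) (f ({x0} : Finset (Fin n))ᶜ) (f ∅) := hf {x0} ({x0} : Finset (Fin n))ᶜ ∅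
    disjoint_compl_right (Finset.disjoint_empty_right _) (Finset.disjoint_empty_right _)
    (by simp)
  rw [hA, hs x0, hi] at hrel
  exact relC_l4 i hrel
end
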